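/- arXiv:2508.10465 — 4 statements merged into one kernel-verified Lean document; each statement's English description precedes it below -/
import Mathlib

section
/- For all T > 0, the function b₂(T) = (2·tanh(2T) + tanh(T)) / (2·tanh(2T) − tanh(T)) is well-defined (the denominator is positive) and strictly increasing in T. -/
open Real Set

private lemma my_tanh_two_mul (x : ℝ) :
    tanh (2 * x) = 2 * tanh x / (1 + tanh x ^ 2) := by
  have hc : (0 : ℝ) < cosh x := cosh_pos x
  have hc2 : (0 : ℝ) < cosh x ^ 2 + sinh x ^ 2 := by positivity
  rw [tanh_eq_sinh_div_cosh, tanh_eq_sinh_div_cosh, sinh_two_mul, cosh_two_mul]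
  field_simp

private lemma my_tanh_pos {x : ℝ} (hx : 0 < x) : 0 < tanh x := by
  rw [tanh_eq_sinh_div_cosh]
  exact div_pos (sinh_pos_iff.2 hx) (cosh_pos x)

private lemma my_tanh_lt_one (x : ℝ) : tanh x < 1 := by
  rw [tanh_eq_sinh_div_cosh]
  rw [div_lt_one (cosh_pos x)]
  exact sinh_lt_cosh x

private lemma my_tanh_lt {a b : ℝ} (hab : a < b) : tanh a < tanh b := by
  rw [tanh_eq_sinh_div_cosh, tanh_eq_sinh_div_cosh,
    div_lt_div_iff₀ (cosh_pos a) (cosh_pos b)]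
  have h1 : sinh (a - b) < 0 := sinh_neg_iff.2 (by linarith)
  have h2 := Real.sinh_sub a b
  nlinarith [cosh_pos a, cosh_pos b]

private lemma ratio_eq {x : ℝ} (hx : 0 < x) :
    (2 * tanh (2 * x) + tanh x) / (2 * tanh (2 * x) - tanh x)
      = (5 + tanh x ^ 2) / (3 - tanh x ^ 2) := by
  have ht0 : 0 < tanh x := my_tanh_pos hx
  have ht1 : tanh x < 1 := my_tanh_lt_one x
  have h3 : 0 < 3 - tanh x ^ 2 := by nlinarith
  have h1 : (0 : ℝ) < 1 + tanh x ^ 2 := by positivity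
  set t := tanh x with htdef
  rw [my_tanh_two_mul]
  rw [← htdef]
  have e1 : 2 * (2 * t / (1 + t ^ 2)) + t = t * (5 + t ^ 2) / (1 + t ^ 2) := by
    field_simp; ring
  have e2 : 2 * (2 * t / (1 + t ^ 2)) - t = t * (3 - t ^ 2) / (1 + t ^ 2) := by
    field_simp; ring
  rw [e1, e2, div_div_div_cancel_right₀, mul_div_mul_left _ _ (ne_of_gt ht0)]
  exact ne_of_gt h1

private lemma denom_pos {x : ℝ} (hx : 0 < x) :
    0 < 2 * tanh (2 * x) - tanh x := by
  have ht0 : 0 < tanh x := my_tanh_pos hx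
  have ht1 : tanh x < 1 := my_tanh_lt_one x
  have h3 : 0 < 3 - tanh x ^ 2 := by nlinarith
  have h1 : (0 : ℝ) < 1 + tanh x ^ 2 := by positivity
  rw [my_tanh_two_mul]
  have : 2 * (2 * tanh x / (1 + tanh x ^ 2)) - tanh x
      = tanh x * (3 - tanh x ^ 2) / (1 + tanh x ^ 2) := by field_simp; ring
  rw [this]
  positivity

theorem b2_welldefined_and_strictMono :
    (∀ T : ℝ, 0 < T → 0 < 2 * tanh (2 * T) - tanh T) ∧
    StrictMonoOn (fun T : ℝ => (2 * tanh (2 * T) + tanh T) / (2 * tanh (2 * T) - tanh T))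
      (Ioi (0 : ℝ)) := by
  constructor
  · exact fun T hT => denom_pos hT
  · intro a ha b hb hab
    simp only [mem_Ioi] at ha hb
    simp only
    rw [ratio_eq ha, ratio_eq hb]
    have hs0 : 0 < tanh a := my_tanh_pos ha
    have hst : tanh a < tanh b := my_tanh_lt hab
    have ht1 : tanh b < 1 := my_tanh_lt_one b
    have h3a : 0 < 3 - tanh a ^ 2 := by nlinarith
    have h3b : 0 < 3 - tanh b ^ 2 := by nlinarith
    rw [div_lt_div_iff₀ h3a h3b]
    nlinarith [sq_nonneg (tanh a + tanh b)]
end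

section
/- For all T > 0, the function b₄(T) = (4·tanh(4T) + tanh(T)) / (4·tanh(4T) − tanh(T)) is well-defined (the denominator is positive) and strictly increasing in T. -/
open Real Set

private lemma tanh_exp_repr (x : ℝ) :
    Real.tanh x = (Real.exp (2 * x) - 1) / (Real.exp (2 * x) + 1) := by
  have h2 : Real.exp (2 * x) = Real.exp x ^ 2 := by
    rw [two_mul, Real.exp_add]; ring
  have he : Real.exp x ≠ 0 := (Real.exp_pos x).ne'
  have he2 : Real.exp x ^ 2 + 1 ≠ 0 := by positivity
  rw [Real.tanh_eq_sinh_div_cosh, Real.sinh_eq, Real.cosh_eq, h2, Real.exp_neg]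
  field_simp

private lemma exp_four (y : ℝ) : Real.exp (2 * (4 * y)) = Real.exp (2 * y) ^ 4 := by
  rw [show 2 * (4 * y) = 2 * y + 2 * y + (2 * y + 2 * y) by ring, Real.exp_add, Real.exp_add]
  ring

private lemma one_lt_exp_two {x : ℝ} (hx : 0 < x) : 1 < Real.exp (2 * x) := by
  rw [show (1 : ℝ) = Real.exp 0 from Real.exp_zero.symm]
  exact Real.exp_lt_exp.2 (by linarith)

private lemma denom_pos_s1 : ∀ T : ℝ, 0 < T → 0 < 4 * Real.tanh (4 * T) - Real.tanh T := by
  intro T hT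
  have ha : 1 < Real.exp (2 * T) := one_lt_exp_two hT
  rw [tanh_exp_repr, tanh_exp_repr, exp_four]
  set a := Real.exp (2 * T) with haa
  have h1 : (0 : ℝ) < a ^ 4 + 1 := by positivity
  have h2 : (0 : ℝ) < a + 1 := by linarith
  rw [mul_div_assoc', div_sub_div _ _ h1.ne' h2.ne']
  apply div_pos ?_ (by positivity)
  nlinarith [sq_nonneg a, sq_nonneg (a - 1), sq_nonneg (a ^ 2 - 1), sq_nonneg (a ^ 2 - a),
    mul_pos (sub_pos.2 ha) (sub_pos.2 ha)]

private lemma core {s t : ℝ} (hs : 0 < s) (hst : s < t) :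
    Real.tanh (4 * t) * Real.tanh s < Real.tanh (4 * s) * Real.tanh t := by
  have ha : 1 < Real.exp (2 * s) := one_lt_exp_two hs
  have hb : 1 < Real.exp (2 * t) := one_lt_exp_two (hs.trans hst)
  have hab : Real.exp (2 * s) < Real.exp (2 * t) := Real.exp_lt_exp.2 (by linarith)
  rw [tanh_exp_repr (4 * t), tanh_exp_repr s, tanh_exp_repr (4 * s), tanh_exp_repr t,
    exp_four, exp_four]
  set a := Real.exp (2 * s) with haa
  set b := Real.exp (2 * t) with hbb
  have h1 : (0 : ℝ) < (b ^ 4 + 1) * (a + 1) := by positivity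
  have h2 : (0 : ℝ) < (a ^ 4 + 1) * (b + 1) := by positivity
  rw [div_mul_div_comm, div_mul_div_comm, div_lt_div_iff₀ h1 h2]
  have hM : (0 : ℝ) < (a + b) ^ 2 + 1 + a ^ 2 * b ^ 2 + (a + b) * (a * b + 1) := by positivity
  have hprod : (0 : ℝ) < (a - 1) * (b - 1) * (b - a) * (a * b - 1) :=
    mul_pos (mul_pos (mul_pos (sub_pos.2 ha) (sub_pos.2 hb)) (sub_pos.2 hab))
      (sub_pos.2 (by nlinarith))
  nlinarith [mul_pos hprod hM]

theorem b4_welldefined_and_strictMono :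
    (∀ T : ℝ, 0 < T → 0 < 4 * tanh (4 * T) - tanh T) ∧
    StrictMonoOn (fun T : ℝ => (4 * tanh (4 * T) + tanh T) / (4 * tanh (4 * T) - tanh T))
      (Ioi (0 : ℝ)) := by
  refine ⟨denom_pos_s1, ?_⟩
  intro s hs t ht hst
  simp only [mem_Ioi] at hs ht
  have ds := denom_pos_s1 s hs
  have dt := denom_pos_s1 t ht
  simp only
  rw [div_lt_div_iff₀ ds dt]
  have hkey := core hs hst
  nlinarith [hkey]
end

section
/- For all T > 0, tanh(4T)·coth(T) is strictly decreasing in T. -/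
open Real Set

theorem tanh4T_coth_strictAnti :
    StrictAntiOn (fun T : ℝ => tanh (4 * T) * (cosh T / sinh T)) (Ioi (0 : ℝ)) := by
  have hderiv : ∀ x ∈ Ioi (0 : ℝ),
      HasDerivAt (fun T : ℝ => tanh (4 * T) * (cosh T / sinh T))
        ((4 * cosh x * sinh x - sinh (4 * x) * cosh (4 * x)) /
          (cosh (4 * x) ^ 2 * sinh x ^ 2)) x := by
    intro x hx
    have hx0 : (0 : ℝ) < x := hx
    have hsx : sinh x ≠ 0 := ne_of_gt (sinh_pos_iff.2 hx0)
    have hc4 : cosh (4 * x) ≠ 0 := ne_of_gt (cosh_pos _)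
    have h4 : HasDerivAt (fun T : ℝ => 4 * T) 4 x := by
      simpa using (hasDerivAt_id x).const_mul (4 : ℝ)
    have hs4 : HasDerivAt (fun T : ℝ => sinh (4 * T)) (cosh (4 * x) * 4) x :=
      (Real.hasDerivAt_sinh (4 * x)).comp x h4
    have hc4' : HasDerivAt (fun T : ℝ => cosh (4 * T)) (sinh (4 * x) * 4) x :=
      (Real.hasDerivAt_cosh (4 * x)).comp x h4
    have htanh : HasDerivAt (fun T : ℝ => sinh (4 * T) / cosh (4 * T))
        ((cosh (4 * x) * 4 * cosh (4 * x) - sinh (4 * x) * (sinh (4 * x) * 4)) /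
          cosh (4 * x) ^ 2) x := hs4.div hc4' hc4
    have hcoth : HasDerivAt (fun T : ℝ => cosh T / sinh T)
        ((sinh x * sinh x - cosh x * cosh x) / sinh x ^ 2) x :=
      (Real.hasDerivAt_cosh x).div (Real.hasDerivAt_sinh x) hsx
    have this : HasDerivAt (fun T : ℝ => sinh (4 * T) / cosh (4 * T) * (cosh T / sinh T)) _ x := htanh.mul hcoth
    have heq : (fun T : ℝ => sinh (4 * T) / cosh (4 * T) * (cosh T / sinh T)) =
        (fun T : ℝ => tanh (4 * T) * (cosh T / sinh T)) := by
      funext T; rw [Real.tanh_eq_sinh_div_cosh]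
    rw [heq] at this
    convert this using 1
    have h1 : cosh (4 * x) ^ 2 - sinh (4 * x) ^ 2 = 1 := Real.cosh_sq_sub_sinh_sq _
    have h2 : cosh x ^ 2 - sinh x ^ 2 = 1 := Real.cosh_sq_sub_sinh_sq _
    have e1 : cosh (4 * x) * 4 * cosh (4 * x) - sinh (4 * x) * (sinh (4 * x) * 4) = 4 := by
      linear_combination 4 * h1
    have e2 : sinh x * sinh x - cosh x * cosh x = -1 := by linear_combination -h2
    rw [e1, e2]
    field_simp
    ring
  apply strictAntiOn_of_deriv_neg (convex_Ioi (0 : ℝ))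
  · exact fun x hx => (hderiv x hx).continuousAt.continuousWithinAt
  · intro x hx
    rw [interior_Ioi] at hx
    rw [(hderiv x hx).deriv]
    have hx0 : (0 : ℝ) < x := hx
    have hsx : 0 < sinh x := sinh_pos_iff.2 hx0
    have hcx : 0 < cosh x := cosh_pos _
    have hc4 : 1 < cosh (4 * x) := (Real.one_lt_cosh).2 (by positivity)
    have hc2 : 1 ≤ cosh (2 * x) := Real.one_le_cosh _
    have hs4 : sinh (4 * x) = 4 * sinh x * cosh x * cosh (2 * x) := by
      have : (4 : ℝ) * x = 2 * (2 * x) := by ring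
      rw [this, Real.sinh_two_mul, Real.sinh_two_mul]
      ring
    apply div_neg_of_neg_of_pos
    · have hcc : 1 < cosh (2 * x) * cosh (4 * x) := by nlinarith
      rw [hs4]
      nlinarith [mul_pos hsx hcx]
    · positivity
end

section
/- Let a₀ = 0.2 and let T satisfy 0 < T < T₁ where coth(T₁) = T₁. With b₂ = b₂(T), b₄ = b₄(T) as above and μ(a) = min(μ₁(a), μ₂(a)) where μ₁(a) = 1/2 − ((1+a)²/4)·b₂ − (a²/4)·b₄ and μ₂(a) = −((1−a)²·b₂ + a²·b₄)/4, one has (1 + a₀²) + 2·μ(a₀) > 0. -/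
open Real

private lemma tanh_double (x : ℝ) :
    Real.tanh (2*x) = 2 * Real.tanh x / (1 + Real.tanh x ^ 2) := by
  rw [Real.tanh_eq_sinh_div_cosh, Real.tanh_eq_sinh_div_cosh,
    Real.sinh_two_mul, Real.cosh_two_mul]
  have hc := Real.cosh_pos x
  have hden : Real.cosh x ^ 2 + Real.sinh x ^ 2 > 0 := by positivity
  field_simp

set_option maxHeartbeats 1000000 in
theorem cylinder_second_variation_positive (T₁ T : ℝ) (hT₁ : 0 < T₁)
    (hcoth : cosh T₁ / sinh T₁ = T₁) (hT : 0 < T) (hTT₁ : T < T₁) :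
    let a₀ : ℝ := 0.2
    let b₂ : ℝ := (2 * tanh (2 * T) + tanh T) / (2 * tanh (2 * T) - tanh T)
    let b₄ : ℝ := (4 * tanh (4 * T) + tanh T) / (4 * tanh (4 * T) - tanh T)
    let μ₁ : ℝ := 1 / 2 - ((1 + a₀) ^ 2 / 4) * b₂ - (a₀ ^ 2 / 4) * b₄
    let μ₂ : ℝ := -(((1 - a₀) ^ 2 * b₂ + a₀ ^ 2 * b₄) / 4)
    0 < (1 + a₀ ^ 2) + 2 * min μ₁ μ₂ := by
  intro a₀ b₂ b₄ μ₁ μ₂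
  -- exp 3 bounds
  have hexp3 : exp 3 = exp 1 * exp 1 * exp 1 := by
    rw [← Real.exp_add, ← Real.exp_add]; norm_num
  have he3lo : (5 : ℝ) < exp 3 := by
    have := Real.exp_one_gt_d9; nlinarith
  have he3hi : exp 3 < 20.09 := by
    have h := Real.exp_one_lt_d9
    have h0 : (0:ℝ) < exp 1 := Real.exp_pos 1
    nlinarith
  -- T₁ < 3/2
  have hsT₁ : 0 < Real.sinh T₁ := Real.sinh_pos_iff.mpr hT₁
  have hcosh : Real.cosh T₁ = T₁ * Real.sinh T₁ := by
    field_simp at hcoth; linarith [hcoth]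
  have hT₁lt : T₁ < 3/2 := by
    by_contra h
    push_neg at h
    have hsub : 0 ≤ Real.sinh (T₁ - 3/2) := by
      have h0 : (0:ℝ) ≤ T₁ - 3/2 := by linarith
      rcases h0.eq_or_lt with he | hl
      · rw [← he, Real.sinh_zero]
      · exact (Real.sinh_pos_iff.mpr hl).le
    rw [Real.sinh_sub] at hsub
    have hs32 : 0 < Real.sinh (3/2 : ℝ) := Real.sinh_pos_iff.mpr (by norm_num)
    have hkey : Real.cosh (3/2 : ℝ) ≥ (3/2) * Real.sinh (3/2 : ℝ) := by
      rw [hcosh] at hsub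
      nlinarith [mul_nonneg (by linarith : (0:ℝ) ≤ T₁ - 3/2) (mul_pos hsT₁ hs32).le,
        mul_pos hsT₁ hs32]
    have hP : Real.exp (3/2 : ℝ) * Real.exp (-(3/2) : ℝ) = 1 := by
      rw [← Real.exp_add]; norm_num
    have hP2 : Real.exp (3/2 : ℝ) * Real.exp (3/2 : ℝ) = Real.exp 3 := by
      rw [← Real.exp_add]; norm_num
    rw [Real.cosh_eq, Real.sinh_eq] at hkey
    have hpos : 0 < Real.exp (-(3/2) : ℝ) := Real.exp_pos _
    nlinarith
  -- t = tanh T bounds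
  set t : ℝ := tanh T with htdef
  have hcT : 0 < Real.cosh T := Real.cosh_pos T
  have ht0 : 0 < t := by
    rw [htdef, Real.tanh_eq_sinh_div_cosh]
    exact div_pos (Real.sinh_pos_iff.mpr hT) hcT
  have htE : t = (Real.exp (2*T) - 1) / (Real.exp (2*T) + 1) := by
    rw [htdef, Real.tanh_eq_sinh_div_cosh, Real.sinh_eq, Real.cosh_eq]
    have h1 : Real.exp T * Real.exp (-T) = 1 := by rw [← Real.exp_add]; norm_num
    have h2 : Real.exp T * Real.exp T = Real.exp (2*T) := by rw [← Real.exp_add]; ring_nf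
    have hpT : 0 < Real.exp T := Real.exp_pos T
    have hp2T : 0 < Real.exp (2*T) := Real.exp_pos _
    rw [← h2]
    field_simp
    nlinarith [congrArg (fun x => x * Real.exp T) h1]
  have hEhi : Real.exp (2*T) < 20.09 := by
    have : Real.exp (2*T) < Real.exp 3 := Real.exp_lt_exp.mpr (by linarith)
    linarith
  have hElo : 1 < Real.exp (2*T) := by
    have := Real.exp_lt_exp.mpr (show (0:ℝ) < 2*T by linarith)
    simpa using this
  have ht906 : t < 0.906 := by
    rw [htE, div_lt_iff₀ (by linarith)]
    nlinarith
  -- double angle formulas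
  have h2 : tanh (2*T) = 2*t / (1 + t^2) := tanh_double T
  have h4 : tanh (4*T) = 2 * (2*t/(1+t^2)) / (1 + (2*t/(1+t^2))^2) := by
    rw [show (4:ℝ)*T = 2*(2*T) by ring, tanh_double (2*T), h2]
  have h1t2 : (0:ℝ) < 1 + t^2 := by positivity
  have ht1 : t < 1 := by linarith
  have h3t2 : (0:ℝ) < 3 - t^2 := by nlinarith
  have hden4 : (0:ℝ) < 15 + 10*t^2 - t^4 := by nlinarith
  have hD2 : 2 * tanh (2*T) - t = t * (3 - t^2) / (1 + t^2) := by
    rw [h2]; field_simp; ring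
  have hD2pos : 0 < 2 * tanh (2*T) - t := by
    rw [hD2]; positivity
  have hsum : (0:ℝ) < (1+t^2)^2 + 4*t^2 := by positivity
  have hD4 : 4 * tanh (4*T) - t = t * (15 + 10*t^2 - t^4) / ((1+t^2)^2 + 4*t^2) := by
    have hne : (1 + (2*t/(1+t^2))^2) ≠ 0 := by positivity
    rw [h4]
    field_simp
    ring
  have hD4pos : 0 < 4 * tanh (4*T) - t := by
    rw [hD4]; positivity
  have hb2 : b₂ = (5 + t^2) / (3 - t^2) := by
    show (2 * tanh (2 * T) + tanh T) / (2 * tanh (2 * T) - tanh T) = _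
    rw [div_eq_div_iff hD2pos.ne' h3t2.ne', h2]
    field_simp
    ring
  have hb4 : b₄ = (17 + 22*t^2 + t^4) / (15 + 10*t^2 - t^4) := by
    show (4 * tanh (4 * T) + tanh T) / (4 * tanh (4 * T) - tanh T) = _
    rw [div_eq_div_iff hD4pos.ne' hden4.ne', h4]
    field_simp
    ring
  -- numeric bounds
  have hx : t^2 < 0.821 := by nlinarith
  have hb2le : b₂ ≤ 2.68 := by
    rw [hb2, div_le_iff₀ h3t2]; nlinarith
  have hb4le : b₄ ≤ 1.59 := by
    rw [hb4, div_le_iff₀ hden4]; nlinarith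
  have hb2pos : 0 < b₂ := by rw [hb2]; positivity
  have hb4pos : 0 < b₄ := by rw [hb4]; positivity
  have ha : a₀ = 0.2 := rfl
  have hμ1 : 0 < (1 + a₀^2) + 2*μ₁ := by
    have hm : μ₁ = 1 / 2 - ((1 + a₀) ^ 2 / 4) * b₂ - (a₀ ^ 2 / 4) * b₄ := rfl
    rw [hm, ha]; nlinarith
  have hμ2 : 0 < (1 + a₀^2) + 2*μ₂ := by
    have hm : μ₂ = -(((1 - a₀) ^ 2 * b₂ + a₀ ^ 2 * b₄) / 4) := rfl
    rw [hm, ha]; nlinarith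
  rcases le_total μ₁ μ₂ with h | h
  · rw [min_eq_left h]; exact hμ1
  · rw [min_eq_right h]; exact hμ2
end
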